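/- Consider the characteristic polynomial of the 3-step non-equidistant scheme, P_β^3(λ) = −(49/36)λ⁹ + (3/2)λ⁸ − (3/20)λ⁵ + 1/90. Then P_β^3(1) = 0, λ = 1 is a simple root, and every complex root λ ≠ 1 of P_β^3 satisfies |λ| < 0.64. In particular the roots of P_β^3 satisfy the root conditions: every root has modulus at most 1 and every root of modulus 1 is simple. -/

import Mathlib

/-!
Since `P(1) = 0`, `P(λ) = (λ - 1) Q(λ)` with `Q(1) = -1`, so `1` is a simple root and it remains
to show that every root of `Q` has modulus `< 0.64`. The largest roots of `Q` have modulus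
`≈ 0.6366`, so a crude estimate cannot work. Rounding the four real quadratic factors of `-180 Q`
to six decimals gives `-180 Q = 245 ∏ (z² + bᵢ z + cᵢ) + R` with a remainder `R` of size `≈ 10⁻⁵`.
For real `b, c` the identity
`4c |z² + bz + c|² = (4c - b²)(|z|² - c)² + (4c Re z + b(|z|² + c))²`
bounds each factor below by `κᵢ (|z|² - cᵢ)` whenever `4cᵢκᵢ² ≤ 4cᵢ - bᵢ²`. On `|z| ≥ ρ` this
lower bound for the product and the triangle-inequality bound for `R` are both controlled by their
values at `|z| = ρ` times `(|z| / ρ)⁸`, so for `ρ = 0.64` a single numerical comparison remains.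
-/

open Polynomial

/-- The characteristic polynomial of the 3-step non-equidistant scheme:
`P_β^3(λ) = −(49/36)λ⁹ + (3/2)λ⁸ − (3/20)λ⁵ + 1/90`. -/
noncomputable def charPolyBeta3 : Polynomial ℂ :=
  C (-(49 / 36) : ℂ) * X ^ 9 + C (3 / 2 : ℂ) * X ^ 8 + C (-(3 / 20) : ℂ) * X ^ 5
    + C (1 / 90 : ℂ)

theorem four_mul_mul_norm_sq_quadratic (b c : ℝ) (z : ℂ) :
    4 * c * ‖z ^ 2 + b * z + c‖ ^ 2 =
      (4 * c - b ^ 2) * (‖z‖ ^ 2 - c) ^ 2 + (4 * c * z.re + b * (‖z‖ ^ 2 + c)) ^ 2 := by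
  rw [Complex.sq_norm, Complex.sq_norm]
  simp only [Complex.normSq_apply, Complex.add_re, Complex.add_im, Complex.mul_re,
    Complex.mul_im, pow_two, Complex.ofReal_re, Complex.ofReal_im]
  ring

theorem mul_sub_le_norm_quadratic {b c κ : ℝ} (hc : 0 < c)
    (hbκ : 4 * c * κ ^ 2 ≤ 4 * c - b ^ 2) (z : ℂ) :
    κ * (‖z‖ ^ 2 - c) ≤ ‖z ^ 2 + b * z + c‖ := by
  have hsq : (κ * (‖z‖ ^ 2 - c)) ^ 2 ≤ ‖z ^ 2 + b * z + c‖ ^ 2 := by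
    refine le_of_mul_le_mul_left ?_ (by positivity : 0 < 4 * c)
    rw [four_mul_mul_norm_sq_quadratic]
    nlinarith [sq_nonneg (‖z‖ ^ 2 - c), sq_nonneg (4 * c * z.re + b * (‖z‖ ^ 2 + c))]
  exact (abs_le_of_sq_le_sq' hsq (norm_nonneg _)).2

theorem mul_mul_sq_le_sq_mul_norm_quadratic {b c κ ρ : ℝ} (hc : 0 < c) (hκ : 0 ≤ κ)
    (hbκ : 4 * c * κ ^ 2 ≤ 4 * c - b ^ 2) (hρ : 0 ≤ ρ) {z : ℂ} (hz : ρ ≤ ‖z‖) :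
    κ * (ρ ^ 2 - c) * ‖z‖ ^ 2 ≤ ρ ^ 2 * ‖z ^ 2 + b * z + c‖ :=
  calc κ * (ρ ^ 2 - c) * ‖z‖ ^ 2 ≤ ρ ^ 2 * (κ * (‖z‖ ^ 2 - c)) := by
        have : ρ ^ 2 ≤ ‖z‖ ^ 2 := pow_le_pow_left₀ hρ hz 2
        nlinarith [mul_nonneg hκ hc.le]
    _ ≤ ρ ^ 2 * ‖z ^ 2 + b * z + c‖ :=
        mul_le_mul_of_nonneg_left (mul_sub_le_norm_quadratic hc hbκ z) (sq_nonneg ρ)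

theorem prod_mul_pow_le_pow_mul_norm_prod_quadratic {ι : Type*} [Fintype ι] {b c κ : ι → ℝ}
    {ρ : ℝ} (hc : ∀ i, 0 < c i) (hcρ : ∀ i, c i ≤ ρ ^ 2) (hκ : ∀ i, 0 ≤ κ i)
    (hbκ : ∀ i, 4 * c i * κ i ^ 2 ≤ 4 * c i - b i ^ 2) (hρ : 0 ≤ ρ) {z : ℂ} (hz : ρ ≤ ‖z‖) :
    (∏ i, κ i * (ρ ^ 2 - c i)) * ‖z‖ ^ (2 * Fintype.card ι) ≤
      ρ ^ (2 * Fintype.card ι) * ‖∏ i, (z ^ 2 + b i * z + c i)‖ := by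
  rw [norm_prod, pow_mul, pow_mul, ← Finset.card_univ, ← Finset.prod_const, ← Finset.prod_const,
    ← Finset.prod_mul_distrib, ← Finset.prod_mul_distrib]
  exact Finset.prod_le_prod
    (fun i _ => mul_nonneg (mul_nonneg (hκ i) (sub_nonneg.2 (hcρ i))) (sq_nonneg _))
    (fun i _ => mul_mul_sq_le_sq_mul_norm_quadratic (hc i) (hκ i) (hbκ i) hρ hz)

theorem pow_mul_norm_sum_le {n N : ℕ} (hn : n ≤ N) (a : Fin n → ℂ) {ρ : ℝ} (hρ : 0 ≤ ρ)
    {z : ℂ} (hz : ρ ≤ ‖z‖) :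
    ρ ^ N * ‖∑ k, a k * z ^ (k : ℕ)‖ ≤ (∑ k, ‖a k‖ * ρ ^ (k : ℕ)) * ‖z‖ ^ N := by
  have hpow (k : Fin n) : ρ ^ N * ‖z‖ ^ (k : ℕ) ≤ ρ ^ (k : ℕ) * ‖z‖ ^ N := by
    obtain ⟨m, rfl⟩ := Nat.exists_eq_add_of_le (k.2.le.trans hn)
    calc ρ ^ ((k : ℕ) + m) * ‖z‖ ^ (k : ℕ) = ρ ^ (k : ℕ) * ‖z‖ ^ (k : ℕ) * ρ ^ m := by ring
      _ ≤ ρ ^ (k : ℕ) * ‖z‖ ^ (k : ℕ) * ‖z‖ ^ m := by gcongr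
      _ = ρ ^ (k : ℕ) * ‖z‖ ^ ((k : ℕ) + m) := by ring
  calc ρ ^ N * ‖∑ k, a k * z ^ (k : ℕ)‖ ≤ ρ ^ N * ∑ k, ‖a k‖ * ‖z‖ ^ (k : ℕ) := by
        gcongr
        refine (norm_sum_le _ _).trans_eq ?_
        simp only [norm_mul, norm_pow]
    _ = ∑ k, ‖a k‖ * (ρ ^ N * ‖z‖ ^ (k : ℕ)) := by
        rw [Finset.mul_sum]; congr 1; ext k; ring
    _ ≤ ∑ k, ‖a k‖ * (ρ ^ (k : ℕ) * ‖z‖ ^ N) :=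
        Finset.sum_le_sum fun k _ => mul_le_mul_of_nonneg_left (hpow k) (norm_nonneg _)
    _ = (∑ k, ‖a k‖ * ρ ^ (k : ℕ)) * ‖z‖ ^ N := by
        rw [Finset.sum_mul]; congr 1; ext k; ring

theorem norm_lt_of_approx_quadratic_factorization {ι : Type*} [Fintype ι] {n : ℕ}
    (hn : n ≤ 2 * Fintype.card ι) {A : ℂ} {b c κ : ι → ℝ} {r : Fin n → ℂ} {ρ : ℝ}
    (hc : ∀ i, 0 < c i) (hcρ : ∀ i, c i ≤ ρ ^ 2) (hκ : ∀ i, 0 ≤ κ i)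
    (hbκ : ∀ i, 4 * c i * κ i ^ 2 ≤ 4 * c i - b i ^ 2) (hρ : 0 < ρ)
    (hdom : ∑ k, ‖r k‖ * ρ ^ (k : ℕ) < ‖A‖ * ∏ i, κ i * (ρ ^ 2 - c i)) {z : ℂ}
    (hz : A * ∏ i, (z ^ 2 + b i * z + c i) + ∑ k, r k * z ^ (k : ℕ) = 0) :
    ‖z‖ < ρ := by
  by_contra! hρz
  have hlow := prod_mul_pow_le_pow_mul_norm_prod_quadratic (b := b) hc hcρ hκ hbκ hρ.le hρz
  have hup := pow_mul_norm_sum_le hn r hρ.le hρz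
  rw [eq_neg_of_add_eq_zero_right hz, norm_neg, norm_mul] at hup
  have hpos : 0 < ‖z‖ ^ (2 * Fintype.card ι) := pow_pos (hρ.trans_le hρz) _
  nlinarith [mul_le_mul_of_nonneg_left hlow (norm_nonneg A), mul_lt_mul_of_pos_right hdom hpos]

noncomputable def charPolyBeta3Deflated : ℂ[X] :=
  C (-(49 / 36)) * X ^ 8 + C (5 / 36) * (X ^ 7 + X ^ 6 + X ^ 5)
    - C (1 / 90) * (X ^ 4 + X ^ 3 + X ^ 2 + X + 1)

theorem charPolyBeta3_eq_mul : charPolyBeta3 = (X - C 1) * charPolyBeta3Deflated := by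
  refine Polynomial.funext fun z => ?_
  simp only [charPolyBeta3, charPolyBeta3Deflated, eval_add, eval_sub, eval_mul, eval_pow,
    eval_C, eval_X, eval_one]
  ring

theorem eval_charPolyBeta3Deflated_one : charPolyBeta3Deflated.eval 1 = -1 := by
  norm_num [charPolyBeta3Deflated]

theorem eval_charPolyBeta3Deflated_eq_zero {z : ℂ} (hz : charPolyBeta3.eval z = 0)
    (hz1 : z ≠ 1) : charPolyBeta3Deflated.eval z = 0 := by
  rw [charPolyBeta3_eq_mul, eval_mul, eval_sub, eval_X, eval_C] at hz
  exact (mul_eq_zero.1 hz).resolve_left (sub_ne_zero.2 hz1)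

theorem charPolyBeta3_rootMultiplicity_one : charPolyBeta3.rootMultiplicity 1 = 1 := by
  have hne : (X - C 1) * charPolyBeta3Deflated ≠ 0 :=
    mul_ne_zero (X_sub_C_ne_zero 1) fun h => by
      simpa [h] using eval_charPolyBeta3Deflated_one
  rw [charPolyBeta3_eq_mul, rootMultiplicity_mul hne, rootMultiplicity_X_sub_C_self,
    rootMultiplicity_eq_zero (by simp [IsRoot, eval_charPolyBeta3Deflated_one])]

namespace CharPolyBeta3

/-- `z² + factorB i * z + factorC i` are the monic real quadratic factors of `-180 Q` rounded to
six decimals, the first one carrying the roots of modulus `≈ 0.6366`. -/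
def factorB : Fin 4 → ℝ := ![-1.20558, -0.325174, 0.919108, 0.509605]

def factorC : Fin 4 → ℝ := ![0.405322, 0.255941, 0.256433, 0.306866]

/-- Two-digit lower approximations of `√(1 - bᵢ² / (4cᵢ))`. -/
def factorκ : Fin 4 → ℝ := ![0.32, 0.94, 0.42, 0.88]

def remainder : Fin 8 → ℝ :=
  ![5.46340459044322078e-6, 6.26466364912121331e-6, -4.27469784069144352e-6,
    3.13199336939911542e-5, -2.3334396880410436e-5, 6.2470621308e-5, 4.90379e-6, 4.5e-5]

theorem approx_factorization (z : ℂ) :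
    -180 * charPolyBeta3Deflated.eval z =
      245 * ∏ i, (z ^ 2 + factorB i * z + factorC i) + ∑ k, (remainder k : ℂ) * z ^ (k : ℕ) := by
  simp only [charPolyBeta3Deflated, eval_sub, eval_add, eval_mul, eval_C, eval_pow, eval_X,
    eval_one, Fin.prod_univ_four, Fin.sum_univ_eight, factorB, factorC, remainder, Matrix.cons_val,
    Fin.coe_ofNat_eq_mod, Nat.reduceMod]
  push_cast
  ring

end CharPolyBeta3

open CharPolyBeta3 in
theorem norm_lt_of_eval_charPolyBeta3Deflated_eq_zero {z : ℂ}
    (hz : charPolyBeta3Deflated.eval z = 0) : ‖z‖ < 0.64 := by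
  refine norm_lt_of_approx_quadratic_factorization (A := 245) (b := factorB) (c := factorC)
    (κ := factorκ) (r := fun k => (remainder k : ℂ)) (by simp) ?_ ?_ ?_ ?_ (by norm_num) ?_ ?_
  iterate 4 (intro i; fin_cases i <;> norm_num [factorB, factorC, factorκ])
  · simp only [Fin.sum_univ_eight, Fin.prod_univ_four, remainder, factorC, factorκ, Matrix.cons_val,
      Fin.coe_ofNat_eq_mod, Nat.reduceMod, Complex.norm_real, Complex.norm_ofNat]
    norm_num
  · rw [← approx_factorization, hz, mul_zero]

/-- `P_β^3(1) = 0`, `λ = 1` is a simple root, every complex root `λ ≠ 1` satisfies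
`|λ| < 0.64`, and the root conditions hold: every root has modulus at most 1 and every root
of modulus 1 is simple. -/
theorem charPolyBeta3_root_conditions :
    charPolyBeta3.eval 1 = 0 ∧
    charPolyBeta3.rootMultiplicity 1 = 1 ∧
    (∀ z : ℂ, charPolyBeta3.eval z = 0 → z ≠ 1 → ‖z‖ < 0.64) ∧
    (∀ z : ℂ, charPolyBeta3.eval z = 0 →
      ‖z‖ ≤ 1 ∧ (‖z‖ = 1 → charPolyBeta3.rootMultiplicity z = 1)) := by
  have hsmall (z : ℂ) (hz : charPolyBeta3.eval z = 0) (hz1 : z ≠ 1) : ‖z‖ < 0.64 :=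
    norm_lt_of_eval_charPolyBeta3Deflated_eq_zero (eval_charPolyBeta3Deflated_eq_zero hz hz1)
  refine ⟨by simp [charPolyBeta3_eq_mul], charPolyBeta3_rootMultiplicity_one, hsmall,
    fun z hz => ?_⟩
  rcases eq_or_ne z 1 with rfl | hz1
  · simp [charPolyBeta3_rootMultiplicity_one]
  · have := hsmall z hz hz1
    exact ⟨by linarith, fun h => by norm_num [h] at this⟩
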